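/- Let u : ℝ^m → [0,1] be a fuzzy set and α ∈ (0,1). Suppose y ∈ [u]_α with d(y, cl({u > α})) > ε for some ε > 0 (this in particular holds with some ε > 0 whenever y ∈ [u]_α and y ∉ cl({u > α})). Let q ∈ ℝ^m with q ≠ y and set e = (y − q)/‖y − q‖. Then there exists a rational number r ≥ ‖y − q‖ such that α is a discontinuous point of S_{u,q,r}(e, ·), i.e. α ∈ D_{u,q,r,e}. -/

import Mathlib

/-!
Put `L = ‖y - q‖` and choose a rational `r` with `L < r < √(L² + ε²)`. For `β ≤ α` the point
`y` lies in `[u]_β ∩ closedBall q r`, so `S(e, β) ≥ ⟨e, y - q⟩ = L`. For `β > α` every point `x`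
of `[u]_β ∩ closedBall q r` lies in `{u > α}`, hence `‖x - y‖ > ε`, and the law of cosines gives
`⟨e, x - q⟩ ≤ (r² + L² - ε²) / (2L) < L`. This jump of `S(e, ·)` at `α` makes `α` a discontinuous
point.
-/

open Set Metric

/-- `S_{u,t,r}(e, α)`: the sup of `⟨e, x - t⟩` over `[u]_α ∩ closedBall t r`,
with value `⊥ = -∞` when this set is empty (`sSup ∅ = ⊥` in `EReal`). -/
noncomputable def Sfun {m : ℕ} (u : EuclideanSpace ℝ (Fin m) → ℝ)
    (t : EuclideanSpace ℝ (Fin m)) (r : ℝ)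
    (e : EuclideanSpace ℝ (Fin m)) (α : ℝ) : EReal :=
  sSup ((fun x => ((inner ℝ e (x - t) : ℝ) : EReal)) ''
    ({x | α ≤ u x} ∩ closedBall t r))

/-- The set `D_{u,t,r,e}` of discontinuous points `α ∈ (0,1)` of `S_{u,t,r}(e, ·)`:
(i) `S_{u,t,r}(e, α) ∈ ℝ` and (ii) either `S_{u,t,r}(e, β) = -∞` for all `β > α`, or
`-∞ < lim_{β→α+} S = ⨆_{β > α} S < lim_{β→α-} S = ⨅_{β < α} S`. -/
noncomputable def Dset {m : ℕ} (u : EuclideanSpace ℝ (Fin m) → ℝ)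
    (t : EuclideanSpace ℝ (Fin m)) (r : ℝ)
    (e : EuclideanSpace ℝ (Fin m)) : Set ℝ :=
  {α | α ∈ Ioo (0:ℝ) 1 ∧ Sfun u t r e α ≠ ⊥ ∧ Sfun u t r e α ≠ ⊤ ∧
    ((∀ β ∈ Ioc α 1, Sfun u t r e β = ⊥) ∨
      ((⊥ < ⨆ β ∈ Ioc α 1, Sfun u t r e β) ∧
        ((⨆ β ∈ Ioc α 1, Sfun u t r e β) < ⨅ β ∈ Ico (0:ℝ) α, Sfun u t r e β)))}

section LawOfCosines

variable {E : Type*} [NormedAddCommGroup E] [InnerProductSpace ℝ E]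

theorem two_mul_real_inner_sub_le {x y q : E} {r ε : ℝ} (hε : 0 ≤ ε)
    (hxq : ‖x - q‖ ≤ r) (hxy : ε ≤ ‖x - y‖) :
    2 * inner ℝ (y - q) (x - q) ≤ r ^ 2 + ‖y - q‖ ^ 2 - ε ^ 2 := by
  have hcos : ‖x - y‖ ^ 2 = ‖x - q‖ ^ 2 - 2 * inner ℝ (x - q) (y - q) + ‖y - q‖ ^ 2 := by
    rw [← norm_sub_sq_real, sub_sub_sub_cancel_right]
  rw [real_inner_comm]
  nlinarith [norm_nonneg (x - q)]

end LawOfCosines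

section Sfun

variable {m : ℕ} {u : EuclideanSpace ℝ (Fin m) → ℝ} {t e : EuclideanSpace ℝ (Fin m)} {r : ℝ}

theorem le_Sfun {β : ℝ} {x : EuclideanSpace ℝ (Fin m)} (hx : β ≤ u x) (hxt : x ∈ closedBall t r) :
    ((inner ℝ e (x - t) : ℝ) : EReal) ≤ Sfun u t r e β :=
  le_sSup (mem_image_of_mem _ ⟨hx, hxt⟩)

theorem Sfun_le {β c : ℝ}
    (h : ∀ x, β ≤ u x → x ∈ closedBall t r → inner ℝ e (x - t) ≤ c) :
    Sfun u t r e β ≤ c :=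
  sSup_le <| by
    rintro _ ⟨x, ⟨hx, hxt⟩, rfl⟩
    exact EReal.coe_le_coe_iff.mpr (h x hx hxt)

theorem Sfun_le_norm_mul (β : ℝ) : Sfun u t r e β ≤ ((‖e‖ * r : ℝ) : EReal) :=
  Sfun_le fun x _ hxt =>
    (real_inner_le_norm e (x - t)).trans <|
      mul_le_mul_of_nonneg_left (mem_closedBall_iff_norm.mp hxt) (norm_nonneg e)

theorem Sfun_ne_top (β : ℝ) : Sfun u t r e β ≠ ⊤ :=
  ((Sfun_le_norm_mul β).trans_lt (EReal.coe_lt_top _)).ne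

theorem norm_sub_le_Sfun {y : EuclideanSpace ℝ (Fin m)} {β : ℝ} (hy : β ≤ u y)
    (hyt : ‖y - t‖ ≤ r) :
    ((‖y - t‖ : ℝ) : EReal) ≤ Sfun u t r (‖y - t‖⁻¹ • (y - t)) β := by
  have hinner : inner ℝ (‖y - t‖⁻¹ • (y - t)) (y - t) = ‖y - t‖ := by
    rw [real_inner_smul_self_left, ← mul_assoc, inv_mul_mul_self]
  simpa only [hinner] using
    le_Sfun (e := ‖y - t‖⁻¹ • (y - t)) hy (mem_closedBall_iff_norm.mpr hyt)

theorem Sfun_le_of_forall_le_dist {y : EuclideanSpace ℝ (Fin m)} (hyt : y ≠ t) {β ε : ℝ}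
    (hε : 0 ≤ ε) (h : ∀ x, β ≤ u x → x ∈ closedBall t r → ε ≤ dist x y) :
    Sfun u t r (‖y - t‖⁻¹ • (y - t)) β ≤
      (((r ^ 2 + ‖y - t‖ ^ 2 - ε ^ 2) / (2 * ‖y - t‖) : ℝ) : EReal) := by
  have hL : 0 < ‖y - t‖ := norm_pos_iff.mpr (sub_ne_zero.mpr hyt)
  refine Sfun_le fun x hx hxt => ?_
  have hxy : ε ≤ ‖x - y‖ := dist_eq_norm x y ▸ h x hx hxt
  have hxt' : ‖x - t‖ ≤ r := mem_closedBall_iff_norm.mp hxt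
  rw [real_inner_smul_left, le_div_iff₀ (by positivity)]
  have := two_mul_real_inner_sub_le hε hxt' hxy
  field_simp
  linarith

theorem mem_Dset_of_gap {α a c : ℝ} (hα : α ∈ Ioo (0:ℝ) 1) (hca : c < a)
    (hlow : ∀ β ≤ α, (a : EReal) ≤ Sfun u t r e β)
    (hup : ∀ β ∈ Ioc α 1, Sfun u t r e β ≤ c) : α ∈ Dset u t r e := by
  refine ⟨hα, ((EReal.bot_lt_coe a).trans_le (hlow α le_rfl)).ne', Sfun_ne_top α, ?_⟩
  by_cases hbot : ∀ β ∈ Ioc α 1, Sfun u t r e β = ⊥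
  · exact Or.inl hbot
  obtain ⟨β₀, hβ₀, hne⟩ := not_forall₂.mp hbot
  refine Or.inr ⟨(bot_lt_iff_ne_bot.mpr hne).trans_le (le_iSup₂_of_le β₀ hβ₀ le_rfl), ?_⟩
  calc (⨆ β ∈ Ioc α 1, Sfun u t r e β) ≤ c := iSup₂_le hup
    _ < a := EReal.coe_lt_coe_iff.mpr hca
    _ ≤ ⨅ β ∈ Ico (0:ℝ) α, Sfun u t r e β := le_iInf₂ fun β hβ => hlow β hβ.2.le

end Sfun

theorem exists_rat_mem_Dset_general {m : ℕ} (u : EuclideanSpace ℝ (Fin m) → ℝ)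
    (α : ℝ) (hα : α ∈ Ioo (0:ℝ) 1)
    (y : EuclideanSpace ℝ (Fin m)) (hy : α ≤ u y)
    (ε : ℝ) (hε : 0 < ε)
    (hdist : ε < infDist y (closure {x | α < u x}))
    (q : EuclideanSpace ℝ (Fin m)) (hq : q ≠ y) :
    ∃ r : ℚ, ‖y - q‖ ≤ (r : ℝ) ∧
      α ∈ Dset u q (r : ℝ) (‖y - q‖⁻¹ • (y - q)) := by
  set L := ‖y - q‖
  have hL : 0 < L := norm_pos_iff.mpr (sub_ne_zero.mpr hq.symm)
  obtain ⟨r, hLr, hr⟩ := exists_rat_btwn ((Real.lt_sqrt hL.le).mpr (by nlinarith) :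
    L < √(L ^ 2 + ε ^ 2))
  have hr2 : (r : ℝ) ^ 2 < L ^ 2 + ε ^ 2 := (Real.lt_sqrt (hL.trans hLr).le).mp hr
  refine ⟨r, hLr.le, mem_Dset_of_gap hα (a := L) (c := (r ^ 2 + L ^ 2 - ε ^ 2) / (2 * L))
    ?_ (fun β hβ => norm_sub_le_Sfun (hβ.trans hy) hLr.le) (fun β hβ => ?_)⟩
  · rw [div_lt_iff₀ (by positivity)]
    nlinarith
  · refine Sfun_le_of_forall_le_dist hq.symm hε.le fun x hx _ => ?_
    have hxcl : x ∈ closure {x | α < u x} := subset_closure (hβ.1.trans_le hx)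
    rw [dist_comm]
    exact (hdist.trans_le (infDist_le_dist_of_mem hxcl)).le

/-- If `y ∈ [u]_α` with `d(y, cl({u > α})) > ε` for some `ε > 0`, and `q ≠ y`,
then with `e = (y - q)/‖y - q‖` there is a rational `r ≥ ‖y - q‖` with
`α ∈ D_{u,q,r,e}`. -/
theorem exists_rat_mem_Dset {m : ℕ} (u : EuclideanSpace ℝ (Fin m) → ℝ)
    (hu : ∀ x, u x ∈ Icc (0:ℝ) 1)
    (α : ℝ) (hα : α ∈ Ioo (0:ℝ) 1)
    (y : EuclideanSpace ℝ (Fin m)) (hy : α ≤ u y)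
    (ε : ℝ) (hε : 0 < ε)
    (hdist : ε < infDist y (closure {x | α < u x}))
    (q : EuclideanSpace ℝ (Fin m)) (hq : q ≠ y) :
    ∃ r : ℚ, ‖y - q‖ ≤ (r : ℝ) ∧
      α ∈ Dset u q (r : ℝ) (‖y - q‖⁻¹ • (y - q)) :=
  exists_rat_mem_Dset_general u α hα y hy ε hε hdist q hq
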